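/- arXiv:1710.09042 — 5 statements merged into one kernel-verified Lean document; each statement's English description precedes it below -/
import Mathlib

section
/- Define the set of primary jobs S^p = {j : C(g_j) < h_j} where g_j = K_j/μ_j is the j-th column of G, and the set of secondary jobs S^s = {1,...,J} \ S^p. Define Q^s(w) = {q ∈ Q(w) : q_j = 0 for all j ∈ S^p}. Then for all w ∈ ℝ₊^I, C(w) = inf{h·q : q ∈ Q^s(w)}; moreover any minimizer q of h·q over Q(w) satisfies q_j = 0 for all j ∈ S^p. -/
private lemma aux_attained {J : ℕ} (h : Fin J → ℝ) (hh : ∀ j, 0 < h j)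
    (A : Set (Fin J → ℝ)) (q₀ : Fin J → ℝ) (hq₀ : q₀ ∈ A)
    (hclosed : IsClosed A) (hnonneg : ∀ q ∈ A, ∀ j, 0 ≤ q j) :
    ∃ q ∈ A, ∀ p ∈ A, ∑ j, h j * q j ≤ ∑ j, h j * p j := by
  set c₀ := ∑ j, h j * q₀ j with hc₀
  have hcost_cont : Continuous fun q : Fin J → ℝ => ∑ j, h j * q j :=
    continuous_finset_sum _ fun j _ => continuous_const.mul (continuous_apply j)
  set B := A ∩ {q | ∑ j, h j * q j ≤ c₀} with hB
  have hBclosed : IsClosed B := hclosed.inter (isClosed_le hcost_cont continuous_const)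
  have hBsub : B ⊆ Set.pi Set.univ fun j => Set.Icc 0 (c₀ / h j) := by
    intro q hq
    rw [Set.mem_univ_pi]
    intro j
    refine ⟨hnonneg q hq.1 j, ?_⟩
    rw [le_div_iff₀ (hh j)]
    have hle : h j * q j ≤ ∑ j', h j' * q j' :=
      Finset.single_le_sum (f := fun j' => h j' * q j')
        (fun j' _ => mul_nonneg (hh j').le (hnonneg q hq.1 j')) (Finset.mem_univ j)
    calc q j * h j = h j * q j := mul_comm _ _
      _ ≤ _ := le_trans hle hq.2
  have hBcompact : IsCompact B :=
    (isCompact_univ_pi fun j => isCompact_Icc).of_isClosed_subset hBclosed hBsub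
  have hq₀B : q₀ ∈ B := ⟨hq₀, hc₀.ge⟩
  have hBne : B.Nonempty := ⟨q₀, hq₀B⟩
  obtain ⟨q, hqB, hqmin⟩ := hBcompact.exists_isMinOn hBne hcost_cont.continuousOn
  refine ⟨q, hqB.1, fun p hp => ?_⟩
  by_cases hpc : ∑ j, h j * p j ≤ c₀
  · exact hqmin ⟨hp, hpc⟩
  · exact le_trans (hqmin hq₀B) (le_of_not_ge hpc)

/-- In computing the workload cost one may restrict to queue-length vectors
that vanish on primary jobs; moreover any minimizer vanishes on primary jobs. -/
theorem stmt_7 (I J : ℕ) (K : Matrix (Fin I) (Fin J) ℝ)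
    (hK01 : ∀ i j, K i j = 0 ∨ K i j = 1)
    (hKcols : ∀ j j' : Fin J, (∀ i, K i j = K i j') → j = j')
    (hKnz : ∀ j, ∃ i, K i j = 1)
    (hloc : ∀ i : Fin I, ∃ j : Fin J, ∀ i' : Fin I, K i' j = if i' = i then 1 else 0)
    (μ : Fin J → ℝ) (hμ : ∀ j, 0 < μ j)
    (h : Fin J → ℝ) (hh : ∀ j, 0 < h j)
    (G : Matrix (Fin I) (Fin J) ℝ) (hG : ∀ i j, G i j = K i j / μ j)
    (C : (Fin I → ℝ) → ℝ)
    (hC : ∀ w : Fin I → ℝ, C w =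
      sInf {c : ℝ | ∃ q : Fin J → ℝ,
        (∀ j, 0 ≤ q j) ∧ G.mulVec q = w ∧ c = ∑ j, h j * q j}) :
    ∀ w : Fin I → ℝ, (∀ i, 0 ≤ w i) →
      (C w = sInf {c : ℝ | ∃ q : Fin J → ℝ,
        (∀ j, 0 ≤ q j) ∧ G.mulVec q = w ∧
        (∀ j, C (fun i => G i j) < h j → q j = 0) ∧ c = ∑ j, h j * q j}) ∧
      (∀ q : Fin J → ℝ, (∀ j, 0 ≤ q j) → G.mulVec q = w →
        (∑ j, h j * q j) = C w →
        ∀ j, C (fun i => G i j) < h j → q j = 0) := by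
  -- basic facts about the cost sets
  have hbdd : ∀ v : Fin I → ℝ, BddBelow {c : ℝ | ∃ q : Fin J → ℝ,
      (∀ j, 0 ≤ q j) ∧ G.mulVec q = v ∧ c = ∑ j, h j * q j} := by
    intro v
    refine ⟨0, ?_⟩
    rintro c ⟨q, hq, -, rfl⟩
    exact Finset.sum_nonneg fun j _ => mul_nonneg (hh j).le (hq j)
  -- standard basis vector for column j is feasible for column j with cost h j
  have hcol : ∀ j : Fin J, (h j) ∈ {c : ℝ | ∃ q : Fin J → ℝ,
      (∀ j', 0 ≤ q j') ∧ G.mulVec q = (fun i => G i j) ∧ c = ∑ j', h j' * q j'} := by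
    intro j
    refine ⟨fun j' => if j' = j then 1 else 0, fun j' => by positivity, ?_, ?_⟩
    · funext i
      simp [Matrix.mulVec, dotProduct, mul_ite, Finset.sum_ite_eq']
    · simp [mul_ite, Finset.sum_ite_eq']
  -- Part 2 : any minimizer vanishes on primary jobs (for arbitrary right-hand side v)
  have part2 : ∀ (v : Fin I → ℝ) (q : Fin J → ℝ), (∀ j, 0 ≤ q j) → G.mulVec q = v →
      (∑ j, h j * q j) = C v → ∀ j, C (fun i => G i j) < h j → q j = 0 := by
    intro v q hq hfeas hmin j hprim
    by_contra hne
    have hqj : 0 < q j := lt_of_le_of_ne (hq j) (Ne.symm hne)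
    -- obtain a cheaper representation of column j
    rw [hC] at hprim
    obtain ⟨c, hcmem, hclt⟩ := exists_lt_of_csInf_lt ⟨h j, hcol j⟩ hprim
    obtain ⟨r, hr, hrfeas, rfl⟩ := hcmem
    -- substituted vector
    set q' : Fin J → ℝ := fun j' => q j' + q j * (r j' - if j' = j then 1 else 0) with hq'
    have hq'nonneg : ∀ j', 0 ≤ q' j' := by
      intro j'
      by_cases hj' : j' = j
      · subst hj'
        have : q' j' = q j' * r j' := by simp [hq']; ring
        rw [this]; exact mul_nonneg (hq j') (hr j')
      · have : q' j' = q j' + q j * r j' := by simp [hq', hj']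
        rw [this]; exact add_nonneg (hq j') (mul_nonneg (hq j) (hr j'))
    have hq'feas : G.mulVec q' = v := by
      have : q' = q + (q j) • (r - fun j' => if j' = j then 1 else 0) := by
        funext j'; simp [hq']
      rw [this, Matrix.mulVec_add, Matrix.mulVec_smul, Matrix.mulVec_sub, hfeas, hrfeas]
      have : G.mulVec (fun j' => if j' = j then (1:ℝ) else 0) = fun i => G i j := by
        funext i
        simp [Matrix.mulVec, dotProduct, mul_ite, Finset.sum_ite_eq']
      rw [this]
      simp
    have hq'cost : ∑ j', h j' * q' j' =
        (∑ j', h j' * q j') + q j * ((∑ j', h j' * r j') - h j) := by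
      have expand : ∀ j', h j' * q' j' =
          h j' * q j' + q j * (h j' * r j') - q j * (if j' = j then h j' else 0) := by
        intro j'
        by_cases hj' : j' = j <;> simp [hq', hj'] <;> ring
      rw [Finset.sum_congr rfl fun j' _ => expand j']
      rw [Finset.sum_sub_distrib, Finset.sum_add_distrib, ← Finset.mul_sum, ← Finset.mul_sum,
        Finset.sum_ite_eq' Finset.univ j h]
      simp
      ring
    have hCle : C v ≤ ∑ j', h j' * q' j' := by
      rw [hC]
      exact csInf_le (hbdd v) ⟨q', hq'nonneg, hq'feas, rfl⟩
    have : ∑ j', h j' * q' j' < C v := by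
      rw [hq'cost, ← hmin]
      nlinarith
    linarith
  intro w hw
  -- feasibility of w via local traffic columns
  choose ℓ hℓ using hloc
  set q₀ : Fin J → ℝ := fun j => ∑ i, if j = ℓ i then w i * μ j else 0 with hq₀def
  have hq₀nonneg : ∀ j, 0 ≤ q₀ j := by
    intro j
    refine Finset.sum_nonneg fun i _ => ?_
    split
    · exact mul_nonneg (hw i) (hμ j).le
    · exact le_refl 0
  have hq₀feas : G.mulVec q₀ = w := by
    funext i'
    have : G.mulVec q₀ i' = ∑ j, ∑ i, if j = ℓ i then G i' j * (w i * μ j) else 0 := by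
      simp [Matrix.mulVec, dotProduct, hq₀def, Finset.mul_sum, mul_ite]
    rw [this, Finset.sum_comm]
    have : ∀ i, (∑ j, if j = ℓ i then G i' j * (w i * μ j) else 0)
        = (if i' = i then 1 else 0) * w i := by
      intro i
      rw [Finset.sum_ite_eq' Finset.univ (ℓ i) (fun j => G i' j * (w i * μ j))]
      simp only [Finset.mem_univ, if_true, hG, hℓ]
      have hne : μ (ℓ i) ≠ 0 := (hμ (ℓ i)).ne'
      field_simp
    rw [Finset.sum_congr rfl fun i _ => this i]
    simp [Finset.sum_ite_eq]
  -- attainment of the infimum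
  have hAclosed : IsClosed {q : Fin J → ℝ | (∀ j, 0 ≤ q j) ∧ G.mulVec q = w} := by
    have h1 : IsClosed {q : Fin J → ℝ | ∀ j, 0 ≤ q j} := by
      have : {q : Fin J → ℝ | ∀ j, 0 ≤ q j} = ⋂ j, {q | 0 ≤ q j} := by
        ext q; simp
      rw [this]
      exact isClosed_iInter fun j => isClosed_le continuous_const (continuous_apply j)
    have h2 : IsClosed {q : Fin J → ℝ | G.mulVec q = w} := by
      have hcont : Continuous fun q : Fin J → ℝ => G.mulVec q := by
        refine continuous_pi fun i => ?_
        have : (fun q : Fin J → ℝ => G.mulVec q i) = fun q => ∑ j, G i j * q j := by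
          funext q; simp [Matrix.mulVec, dotProduct]
        rw [this]
        exact continuous_finset_sum _ fun j _ => continuous_const.mul (continuous_apply j)
      exact isClosed_eq hcont continuous_const
    exact h1.inter h2
  obtain ⟨qs, ⟨hqs_nonneg, hqs_feas⟩, hqs_min⟩ :=
    aux_attained h hh {q : Fin J → ℝ | (∀ j, 0 ≤ q j) ∧ G.mulVec q = w} q₀
      ⟨hq₀nonneg, hq₀feas⟩ hAclosed (fun q hq => hq.1)
  have hCw : C w = ∑ j, h j * qs j := by
    rw [hC]
    refine le_antisymm (csInf_le (hbdd w) ⟨qs, hqs_nonneg, hqs_feas, rfl⟩) ?_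
    refine le_csInf ⟨∑ j, h j * q₀ j, q₀, hq₀nonneg, hq₀feas, rfl⟩ ?_
    rintro c ⟨q, hq, hfeas, rfl⟩
    exact hqs_min q ⟨hq, hfeas⟩
  have hqs_sec : ∀ j, C (fun i => G i j) < h j → qs j = 0 :=
    part2 w qs hqs_nonneg hqs_feas hCw.symm
  constructor
  · -- Part 1
    have hsub : {c : ℝ | ∃ q : Fin J → ℝ,
        (∀ j, 0 ≤ q j) ∧ G.mulVec q = w ∧
        (∀ j, C (fun i => G i j) < h j → q j = 0) ∧ c = ∑ j, h j * q j} ⊆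
        {c : ℝ | ∃ q : Fin J → ℝ,
        (∀ j, 0 ≤ q j) ∧ G.mulVec q = w ∧ c = ∑ j, h j * q j} := by
      rintro c ⟨q, hq, hfeas, -, rfl⟩
      exact ⟨q, hq, hfeas, rfl⟩
    have hmem : (∑ j, h j * qs j) ∈ {c : ℝ | ∃ q : Fin J → ℝ,
        (∀ j, 0 ≤ q j) ∧ G.mulVec q = w ∧
        (∀ j, C (fun i => G i j) < h j → q j = 0) ∧ c = ∑ j, h j * q j} :=
      ⟨qs, hqs_nonneg, hqs_feas, hqs_sec, rfl⟩
    refine le_antisymm ?_ ?_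
    · rw [hC]
      exact csInf_le_csInf (hbdd w) ⟨_, hmem⟩ hsub
    · rw [hCw]
      refine csInf_le ?_ hmem
      exact (hbdd w).mono hsub
  · exact fun q hq hfeas hmin => part2 w q hq hfeas hmin
end

section
/- Every job type that uses only one resource is secondary: if j satisfies ∑_i K_{ij} = 1 (i.e. j ∈ S¹), then C(g_j) = h_j, so j ∉ S^p. -/
/-- Every single-resource job type is secondary: `C(g_j) = h_j`, so `j ∉ S^p`. -/
theorem stmt_8 (I J : ℕ) (K : Matrix (Fin I) (Fin J) ℝ)
    (hK01 : ∀ i j, K i j = 0 ∨ K i j = 1)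
    (hKcols : ∀ j j' : Fin J, (∀ i, K i j = K i j') → j = j')
    (hKnz : ∀ j, ∃ i, K i j = 1)
    (hloc : ∀ i : Fin I, ∃ j : Fin J, ∀ i' : Fin I, K i' j = if i' = i then 1 else 0)
    (μ : Fin J → ℝ) (hμ : ∀ j, 0 < μ j)
    (h : Fin J → ℝ) (hh : ∀ j, 0 < h j)
    (G : Matrix (Fin I) (Fin J) ℝ) (hG : ∀ i j, G i j = K i j / μ j)
    (C : (Fin I → ℝ) → ℝ)
    (hC : ∀ w : Fin I → ℝ, C w =
      sInf {c : ℝ | ∃ q : Fin J → ℝ,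
        (∀ j, 0 ≤ q j) ∧ G.mulVec q = w ∧ c = ∑ j, h j * q j})
    (j : Fin J) (hj : (∑ i, K i j) = 1) :
    C (fun i => G i j) = h j ∧ ¬ C (fun i => G i j) < h j := by
  obtain ⟨i0, hi0⟩ := hKnz j
  -- column j is zero away from i0
  have hzero : ∀ i, i ≠ i0 → K i j = 0 := by
    intro i hi
    rcases hK01 i j with h0 | h1
    · exact h0
    · exfalso
      have hle : (2 : ℝ) ≤ ∑ i', K i' j := by
        have : ∑ i' ∈ ({i, i0} : Finset (Fin I)), K i' j = 2 := by
          rw [Finset.sum_pair hi, h1, hi0]; norm_num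
        rw [← this]
        refine Finset.sum_le_sum_of_subset_of_nonneg (Finset.subset_univ _) ?_
        intro i' _ _
        rcases hK01 i' j with h' | h' <;> simp [h']
      rw [hj] at hle; linarith
  have hKnonneg : ∀ i j', (0:ℝ) ≤ K i j' := by
    intro i j'; rcases hK01 i j' with h' | h' <;> simp [h']
  have hset : {c : ℝ | ∃ q : Fin J → ℝ,
      (∀ j', 0 ≤ q j') ∧ G.mulVec q = (fun i => G i j) ∧ c = ∑ j', h j' * q j'}
      = {h j} := by
    ext c
    simp only [Set.mem_setOf_eq, Set.mem_singleton_iff]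
    constructor
    · rintro ⟨q, hq0, hqG, rfl⟩
      -- for i ≠ i0, each term K i j' * q j' must vanish
      have hterm : ∀ i, i ≠ i0 → ∀ j', K i j' * q j' = 0 := by
        intro i hi
        have hGi : ∑ j', G i j' * q j' = 0 := by
          have := congrFun hqG i
          simp only [Matrix.mulVec, dotProduct] at this
          rw [this, hG, hzero i hi, zero_div]
        have hnn : ∀ j' ∈ Finset.univ, (0:ℝ) ≤ G i j' * q j' := by
          intro j' _
          exact mul_nonneg (by rw [hG]; exact div_nonneg (hKnonneg i j') (hμ j').le) (hq0 j')
        intro j'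
        have := (Finset.sum_eq_zero_iff_of_nonneg hnn).mp hGi j' (Finset.mem_univ j')
        rw [hG] at this
        rcases mul_eq_zero.mp this with h' | h'
        · rcases div_eq_zero_iff.mp h' with h'' | h''
          · rw [h'', zero_mul]
          · exact absurd h'' (hμ j').ne'
        · rw [h', mul_zero]
      -- q vanishes off j
      have hqzero : ∀ j', j' ≠ j → q j' = 0 := by
        intro j' hj'
        by_contra hq
        have hqpos : q j' ≠ 0 := hq
        have hcol : ∀ i, K i j = K i j' := by
          intro i
          by_cases hi : i = i0
          · rw [hi, hi0]
            obtain ⟨i1, hi1⟩ := hKnz j'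
            by_cases hi1' : i1 = i0
            · rw [← hi1', hi1]
            · exact absurd (mul_eq_zero.mp (hterm i1 hi1' j')) (by
                rw [hi1]; push_neg; exact ⟨one_ne_zero, hqpos⟩)
          · rw [hzero i hi]
            rcases mul_eq_zero.mp (hterm i hi j') with h' | h'
            · rw [h']
            · exact absurd h' hqpos
        exact hj' (hKcols j' j fun i => (hcol i).symm)
      -- from the equation at i0, q j = 1
      have hqj : q j = 1 := by
        have := congrFun hqG i0
        simp only [Matrix.mulVec, dotProduct] at this
        rw [Finset.sum_eq_single j (fun j' _ hj' => by rw [hqzero j' hj', mul_zero])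
          (fun hmem => absurd (Finset.mem_univ j) hmem)] at this
        rw [hG, hi0] at this
        have hμj := (hμ j).ne'
        field_simp at this
        exact this
      rw [Finset.sum_eq_single j (fun j' _ hj' => by rw [hqzero j' hj', mul_zero])
        (fun hmem => absurd (Finset.mem_univ j) hmem), hqj, mul_one]
    · rintro rfl
      refine ⟨fun j' => if j' = j then 1 else 0, fun j' => by positivity, ?_, ?_⟩
      · funext i
        simp only [Matrix.mulVec, dotProduct, mul_ite, mul_one, mul_zero]
        simp
      · simp
  refine ⟨?_, ?_⟩
  · rw [hC, hset, csInf_singleton]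
  · rw [hC, hset, csInf_singleton]
    exact lt_irrefl _
end

section
/- Under the nesting hypothesis (for all j,k ∈ S^m: N_j ⊆ N_k, N_k ⊆ N_j, or N_j ∩ N_k = ∅), let ρ order S^m so that for j < k either N_{ρ(k)} ⊆ N_{ρ(j)} or they are disjoint. Fix k and let M ⊆ ({ρ(k+1),...,ρ(m)} ∪ S¹) \ {ρ(k)} be a minimal covering set for ρ(k) such that no N_{ρ(l)} with l < k is contained in ∪_{j∈M} N_j. Then the sets {N_j : j ∈ M} are pairwise disjoint and ∑_{j∈M} K_j = K_{ρ(k)}. -/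
/-- Under the nesting (laminar) hypothesis, a minimal covering set `M` for
`ρ k` built from lower-ranked multi-resource jobs and single-resource jobs,
whose union contains no `N_{ρ l}` with `l < k`, consists of pairwise disjoint
resource sets and satisfies `∑_{j ∈ M} K_j = K_{ρ k}`. -/
theorem stmt_11 (I J m : ℕ) (K : Matrix (Fin I) (Fin J) ℝ)
    (hK01 : ∀ i j, K i j = 0 ∨ K i j = 1)
    (N : Fin J → Finset (Fin I)) (hN : ∀ j i, i ∈ N j ↔ K i j = 1)
    (Sm : Finset (Fin J)) (hSm1 : ∀ j ∈ Sm, (N j).card ≠ 1)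
    (hlam : ∀ j ∈ Sm, ∀ k ∈ Sm, N j ⊆ N k ∨ N k ⊆ N j ∨ Disjoint (N j) (N k))
    (ρ : Fin m → Fin J) (hρinj : Function.Injective ρ)
    (hρS : ∀ a, ρ a ∈ Sm) (hρsurj : ∀ j ∈ Sm, ∃ a, ρ a = j)
    (hρord : ∀ a b : Fin m, a < b →
      N (ρ b) ⊆ N (ρ a) ∨ Disjoint (N (ρ a)) (N (ρ b)))
    (k : Fin m) (M : Finset (Fin J)) (hρkM : ρ k ∉ M)
    (hMmem : ∀ j ∈ M, (∃ a : Fin m, k < a ∧ ρ a = j) ∨ (N j).card = 1)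
    (hcov : N (ρ k) ⊆ M.biUnion N)
    (hmin : ∀ l ∈ M, ¬ N (ρ k) ⊆ (M.erase l).biUnion N)
    (hnc : ∀ l : Fin m, l < k → ¬ N (ρ l) ⊆ M.biUnion N) :
    (∀ j ∈ M, ∀ j' ∈ M, j ≠ j' → Disjoint (N j) (N j')) ∧
    (∀ i, ∑ j ∈ M, K i j = K i (ρ k)) := by

  -- witness: each l in M covers some point of N (ρ k) that no other member covers
  have hwit : ∀ l ∈ M, ∃ i, i ∈ N (ρ k) ∧ i ∈ N l ∧ ∀ j ∈ M, i ∈ N j → j = l := by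
    intro l hl
    obtain ⟨i, hi, hni⟩ := Finset.not_subset.mp (hmin l hl)
    have huniq : ∀ j ∈ M, i ∈ N j → j = l := by
      intro j hj hij
      by_contra h
      exact hni (Finset.mem_biUnion.mpr ⟨j, Finset.mem_erase.mpr ⟨h, hj⟩, hij⟩)
    obtain ⟨j, hj, hij⟩ := Finset.mem_biUnion.mp (hcov hi)
    exact ⟨i, hi, (huniq j hj hij) ▸ hij, huniq⟩
  -- if one member's set is contained in another's, they are equal
  have hsubeq : ∀ j ∈ M, ∀ j' ∈ M, N j ⊆ N j' → j = j' := by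
    intro j hj j' hj' hss
    obtain ⟨i, _, hij, huniq⟩ := hwit j hj
    exact (huniq j' hj' (hss hij)).symm
  -- laminarity within M
  have hlamM : ∀ j ∈ M, ∀ j' ∈ M, N j ⊆ N j' ∨ N j' ⊆ N j ∨ Disjoint (N j) (N j') := by
    intro j hj j' hj'
    rcases hMmem j hj with ⟨a, _, ha⟩ | hc1
    · rcases hMmem j' hj' with ⟨b, _, hb⟩ | hc1'
      · exact hlam j (ha ▸ hρS a) j' (hb ▸ hρS b)
      · obtain ⟨x, hx⟩ := Finset.card_eq_one.mp hc1'
        by_cases hxj : x ∈ N j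
        · exact Or.inr (Or.inl (hx ▸ Finset.singleton_subset_iff.mpr hxj))
        · exact Or.inr (Or.inr (by rw [hx, Finset.disjoint_singleton_right]; exact hxj))
    · obtain ⟨x, hx⟩ := Finset.card_eq_one.mp hc1
      by_cases hxj : x ∈ N j'
      · exact Or.inl (hx ▸ Finset.singleton_subset_iff.mpr hxj)
      · exact Or.inr (Or.inr (by rw [hx, Finset.disjoint_singleton_left]; exact hxj))
  have hdisj : ∀ j ∈ M, ∀ j' ∈ M, j ≠ j' → Disjoint (N j) (N j') := by
    intro j hj j' hj' hne
    rcases hlamM j hj j' hj' with h | h | h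
    · exact absurd (hsubeq j hj j' hj' h) hne
    · exact absurd (hsubeq j' hj' j hj h).symm hne
    · exact h
  -- each member's set is contained in N (ρ k)
  have hsubk : ∀ j ∈ M, N j ⊆ N (ρ k) := by
    intro j hj
    obtain ⟨i, hik, hij, _⟩ := hwit j hj
    rcases hMmem j hj with ⟨a, hka, ha⟩ | hc1
    · rcases hρord k a hka with h | h
      · exact ha ▸ h
      · exact absurd (Finset.disjoint_left.mp h hik) (by rw [ha]; exact fun hh => hh hij)
    · obtain ⟨x, hx⟩ := Finset.card_eq_one.mp hc1
      rw [hx]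
      have : i = x := by rw [hx] at hij; exact Finset.mem_singleton.mp hij
      exact Finset.singleton_subset_iff.mpr (this ▸ hik)
  refine ⟨hdisj, fun i => ?_⟩
  have key : ∀ j, (i ∈ N j → K i j = 1) ∧ (i ∉ N j → K i j = 0) := by
    intro j
    constructor
    · exact (hN j i).mp
    · intro h
      rcases hK01 i j with h0 | h1
      · exact h0
      · exact absurd ((hN j i).mpr h1) h
  by_cases hik : i ∈ N (ρ k)
  · obtain ⟨j0, hj0, hij0⟩ := Finset.mem_biUnion.mp (hcov hik)
    rw [Finset.sum_eq_single j0]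
    · rw [(key j0).1 hij0, (key (ρ k)).1 hik]
    · intro j hj hne
      exact (key j).2 (Finset.disjoint_left.mp (hdisj j hj j0 hj0 hne) · hij0)
    · intro h; exact absurd hj0 h
  · rw [(key (ρ k)).2 hik, Finset.sum_eq_zero]
    intro j hj
    exact (key j).2 (fun h => hik (hsubk j hj h))
end

section
/- Let ρ be a viable ranking of S^m and for w ∈ ℝ₊^I define recursively q*_{ρ(1)}(w) = μ_{ρ(1)} min_{i ∈ N_{ρ(1)}} w_i, then for k ≥ 2, q*_{ρ(k)}(w) = μ_{ρ(k)} min_{i ∈ N_{ρ(k)}} (w_i − ∑_{l<k} G_{i,ρ(l)} q*_{ρ(l)}(w)), and for j ∈ S¹ with unique resource î(j), q*_j(w) = μ_j (w_{î(j)} − ∑_{k=1}^m G_{î(j),ρ(k)} q*_{ρ(k)}(w)); set q*_j(w) = 0 for j ∈ S^p. Then q*(w) ≥ 0 componentwise, for all w ∈ ℝ₊^I. -/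
/-!
Write `r_k(w)_i = w_i - ∑_{l<k} G_{i,ρ(l)} q*_{ρ(l)}(w)` for the residual capacity of resource
`i` once the first `k` ranked jobs are served. Since
`G_{i,ρ(k)} q*_{ρ(k)} = K_{i,ρ(k)} min_{i' ∈ N_{ρ(k)}} r_k(w)_{i'}`, each step subtracts from
`r_k(w)_i` either nothing or a minimum that includes `r_k(w)_i` itself, so `r_k(w) ≥ 0`
propagates from `r_0(w) = w`. Every `q*_j(w)` is `μ_j` times a minimum of residuals or a
residual, hence nonnegative.
-/

open Finset

theorem sub_mul_sInf_nonneg {ι : Type*} {r a : ι → ℝ} (hr : ∀ i, 0 ≤ r i)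
    (ha : ∀ i, a i = 0 ∨ a i = 1) (i : ι) :
    0 ≤ r i - a i * sInf {x | ∃ i', a i' = 1 ∧ x = r i'} := by
  rcases ha i with h | h
  · simpa [h] using hr i
  · rw [h, one_mul, sub_nonneg]
    exact csInf_le ⟨0, by rintro _ ⟨i', -, rfl⟩; exact hr i'⟩ ⟨i, h, rfl⟩

section Residual

variable {I J m : ℕ} (G : Matrix (Fin I) (Fin J) ℝ) (ρ : Fin m → Fin J) (q : Fin J → ℝ)
  (w : Fin I → ℝ)

def residualCapacity (n : ℕ) (i : Fin I) : ℝ :=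
  w i - ∑ l ∈ univ.filter (fun l : Fin m => (l : ℕ) < n), G i (ρ l) * q (ρ l)

theorem residualCapacity_zero (i : Fin I) : residualCapacity G ρ q w 0 i = w i := by
  simp [residualCapacity]

theorem residualCapacity_succ {n : ℕ} (hn : n < m) (i : Fin I) :
    residualCapacity G ρ q w (n + 1) i =
      residualCapacity G ρ q w n i - G i (ρ ⟨n, hn⟩) * q (ρ ⟨n, hn⟩) := by
  have hsplit : univ.filter (fun l : Fin m => (l : ℕ) < n + 1) =
      insert ⟨n, hn⟩ (univ.filter (fun l : Fin m => (l : ℕ) < n)) := by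
    ext l
    simp only [mem_filter, mem_univ, true_and, mem_insert, Fin.ext_iff]
    omega
  rw [residualCapacity, residualCapacity, hsplit, sum_insert (by simp)]
  ring

theorem residualCapacity_of_le {n : ℕ} (hn : m ≤ n) (i : Fin I) :
    residualCapacity G ρ q w n i = w i - ∑ l, G i (ρ l) * q (ρ l) := by
  rw [residualCapacity, filter_true_of_mem fun l _ => l.isLt.trans_le hn]

theorem residualCapacity_nonneg {K : Matrix (Fin I) (Fin J) ℝ} {μ : Fin J → ℝ}
    (hK01 : ∀ i j, K i j = 0 ∨ K i j = 1) (hμ : ∀ j, 0 < μ j)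
    (hG : ∀ i j, G i j = K i j / μ j) (hw : ∀ i, 0 ≤ w i)
    (hq : ∀ k : Fin m, q (ρ k) =
      μ (ρ k) * sInf {x | ∃ i, K i (ρ k) = 1 ∧ x = residualCapacity G ρ q w k i}) :
    ∀ n ≤ m, ∀ i, 0 ≤ residualCapacity G ρ q w n i := by
  intro n
  induction n with
  | zero => intro _ i; simpa [residualCapacity_zero] using hw i
  | succ n ih =>
    intro hn i
    have hnm : n < m := hn
    have hstep : G i (ρ ⟨n, hnm⟩) * q (ρ ⟨n, hnm⟩) = K i (ρ ⟨n, hnm⟩) *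
        sInf {x | ∃ i', K i' (ρ ⟨n, hnm⟩) = 1 ∧ x = residualCapacity G ρ q w n i'} := by
      rw [hG, hq, ← mul_assoc, div_mul_cancel₀ _ (hμ _).ne']
    rw [residualCapacity_succ G ρ q w hnm, hstep]
    exact sub_mul_sInf_nonneg (ih hnm.le) (fun i => hK01 i _) i

end Residual

theorem stmt_12_general (I J m : ℕ) (K : Matrix (Fin I) (Fin J) ℝ)
    (hK01 : ∀ i j, K i j = 0 ∨ K i j = 1)
    (μ : Fin J → ℝ) (hμ : ∀ j, 0 < μ j)
    (G : Matrix (Fin I) (Fin J) ℝ) (hG : ∀ i j, G i j = K i j / μ j)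
    (Sp : Finset (Fin J))
    (ρ : Fin m → Fin J)
    (ihat : Fin J → Fin I)
    (hpart : ∀ j : Fin J, j ∈ Sp ∨ (∃ k : Fin m, ρ k = j) ∨ (∑ i, K i j) = 1)
    (qs : (Fin I → ℝ) → Fin J → ℝ)
    (hqsP : ∀ w, ∀ j ∈ Sp, qs w j = 0)
    (hqsM : ∀ w : Fin I → ℝ, ∀ k : Fin m, qs w (ρ k) =
      μ (ρ k) * sInf {x : ℝ | ∃ i : Fin I, K i (ρ k) = 1 ∧
        x = w i - ∑ l ∈ Finset.univ.filter (fun l : Fin m => l < k),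
              G i (ρ l) * qs w (ρ l)})
    (hqsS : ∀ w : Fin I → ℝ, ∀ j : Fin J, j ∉ Sp → (∀ k : Fin m, ρ k ≠ j) →
      (∑ i, K i j) = 1 →
      qs w j = μ j * (w (ihat j) - ∑ k : Fin m, G (ihat j) (ρ k) * qs w (ρ k))) :
    ∀ w : Fin I → ℝ, (∀ i, 0 ≤ w i) → ∀ j, 0 ≤ qs w j := by
  intro w hw j
  have hres := residualCapacity_nonneg G ρ (qs w) w hK01 hμ hG hw (hqsM w)
  by_cases hjP : j ∈ Sp
  · exact (hqsP w j hjP).ge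
  by_cases hjM : ∃ k, ρ k = j
  · obtain ⟨k, rfl⟩ := hjM
    rw [hqsM w k]
    exact mul_nonneg (hμ _).le
      (Real.sInf_nonneg (by rintro _ ⟨i, -, rfl⟩; exact hres k k.isLt.le i))
  have hj1 : ∑ i, K i j = 1 := ((hpart j).resolve_left hjP).resolve_left hjM
  rw [hqsS w j hjP (fun k hk => hjM ⟨k, hk⟩) hj1,
    ← residualCapacity_of_le G ρ (qs w) w le_rfl]
  exact mul_nonneg (hμ j).le (hres m le_rfl (ihat j))

/-- Nonnegativity of the greedy recursive selection `q*`. -/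
theorem stmt_12 (I J m : ℕ) (K : Matrix (Fin I) (Fin J) ℝ)
    (hK01 : ∀ i j, K i j = 0 ∨ K i j = 1)
    (hKnz : ∀ j, ∃ i, K i j = 1)
    (μ : Fin J → ℝ) (hμ : ∀ j, 0 < μ j)
    (G : Matrix (Fin I) (Fin J) ℝ) (hG : ∀ i j, G i j = K i j / μ j)
    (Sp : Finset (Fin J))
    (ρ : Fin m → Fin J) (hρinj : Function.Injective ρ)
    (hρSp : ∀ k : Fin m, ρ k ∉ Sp)
    (ihat : Fin J → Fin I)
    (hihat : ∀ j, (∑ i, K i j) = 1 → K (ihat j) j = 1)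
    (hpart : ∀ j : Fin J, j ∈ Sp ∨ (∃ k : Fin m, ρ k = j) ∨ (∑ i, K i j) = 1)
    (qs : (Fin I → ℝ) → Fin J → ℝ)
    (hqsP : ∀ w, ∀ j ∈ Sp, qs w j = 0)
    (hqsM : ∀ w : Fin I → ℝ, ∀ k : Fin m, qs w (ρ k) =
      μ (ρ k) * sInf {x : ℝ | ∃ i : Fin I, K i (ρ k) = 1 ∧
        x = w i - ∑ l ∈ Finset.univ.filter (fun l : Fin m => l < k),
              G i (ρ l) * qs w (ρ l)})
    (hqsS : ∀ w : Fin I → ℝ, ∀ j : Fin J, j ∉ Sp → (∀ k : Fin m, ρ k ≠ j) →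
      (∑ i, K i j) = 1 →
      qs w j = μ j * (w (ihat j) - ∑ k : Fin m, G (ihat j) (ρ k) * qs w (ρ k))) :
    ∀ w : Fin I → ℝ, (∀ i, 0 ≤ w i) → ∀ j, 0 ≤ qs w j :=
  stmt_12_general I J m K hK01 μ hμ G hG Sp ρ ihat hpart qs hqsP hqsM hqsS
end

section
/- (Admissibility of the rate allocation.) In the network with capacities C = Kϱ (heavy traffic), δ = min_j ϱ_j / (2J), suppose the rate vector y ∈ ℝ^J satisfies: y_j ∈ [ϱ_j − δ, ϱ_j + δ] for all j ∉ S¹; for each resource i, either (a) y_{ǰ(i)} = C_i − ∑_{l ≠ ǰ(i): K_{il}=1} y_l, or (b) y_{ǰ(i)} = ϱ_{ǰ(i)} − δ and y_l < ϱ_l for every l with K_{il} = 1. Then y_j ≥ 0 for all j and (Ky)_i ≤ C_i for all i. -/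
/-! Split each row sum `(K y)_i` into the private job `ǰ(i)` and the jobs it shares with
other resources. A job sharing a resource has column sum `≠ 1` (its column would otherwise be
the unit vector `e_i`, i.e. the column of `ǰ(i)`), so its rate lies within `δ` of `ϱ`. In case (a)
the row is saturated and `y_{ǰ(i)} ≥ ϱ_{ǰ(i)} - J δ ≥ ϱ_{ǰ(i)} / 2`; in case (b) every rate on the
row is below `ϱ`, so `(K y)_i ≤ (K ϱ)_i = C_i`. All other rates are at least `ϱ_j - δ ≥ ϱ_j / 2`. -/

open scoped Classical

open Finset

section ZeroOneVectors

variable {ι R : Type*} [Fintype ι]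

theorem sum_mul_eq_sum_filter_eq_one [Semiring R] [DecidableEq R] {a : ι → R}
    (ha : ∀ j, a j = 0 ∨ a j = 1) (f : ι → R) :
    ∑ j, a j * f j = ∑ j ∈ univ.filter (a · = 1), f j := by
  rw [sum_filter]
  refine sum_congr rfl fun j _ => ?_
  split_ifs with h
  · rw [h, one_mul]
  · rw [(ha j).resolve_right h, zero_mul]

theorem sum_mul_eq_add_sum_filter_ne [DecidableEq ι] [Semiring R] [DecidableEq R] {a : ι → R}
    (ha : ∀ j, a j = 0 ∨ a j = 1) {j₀ : ι} (hj₀ : a j₀ = 1) (f : ι → R) :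
    ∑ j, a j * f j = f j₀ + ∑ j ∈ univ.filter (fun j => j ≠ j₀ ∧ a j = 1), f j := by
  have hmem : j₀ ∈ univ.filter (a · = 1) := by simpa using hj₀
  rw [sum_mul_eq_sum_filter_eq_one ha, ← add_sum_erase _ _ hmem]
  congr 2
  ext j
  simp

theorem sum_mul_le_sum_mul_of_zero_or_one [Semiring R] [PartialOrder R] [IsOrderedAddMonoid R]
    {a : ι → R} (ha : ∀ j, a j = 0 ∨ a j = 1) {f g : ι → R}
    (hfg : ∀ j, a j = 1 → f j ≤ g j) : ∑ j, a j * f j ≤ ∑ j, a j * g j := by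
  classical
  rw [sum_mul_eq_sum_filter_eq_one ha, sum_mul_eq_sum_filter_eq_one ha]
  exact sum_le_sum fun j hj => hfg j (mem_filter.1 hj).2

theorem eq_single_of_sum_eq_one [DecidableEq ι] [Semiring R] [PartialOrder R]
    [IsOrderedCancelAddMonoid R] [ZeroLEOneClass R] {v : ι → R} (hv : ∀ j, v j = 0 ∨ v j = 1)
    {i : ι} (hi : v i = 1) (hsum : ∑ j, v j = 1) : v = Pi.single i 1 := by
  have hrest : ∑ j ∈ univ.erase i, v j = 0 := by
    rw [← add_sum_erase _ _ (mem_univ i), hi] at hsum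
    exact add_eq_left.1 hsum
  have hnonneg : ∀ j ∈ univ.erase i, 0 ≤ v j := fun j _ => by
    rcases hv j with h | h <;> simp [h]
  funext j
  by_cases hj : j = i
  · subst hj; simp [hi]
  · rw [Pi.single_eq_of_ne hj]
    exact (sum_eq_zero_iff_of_nonneg hnonneg).1 hrest j (mem_erase.2 ⟨hj, mem_univ j⟩)

end ZeroOneVectors

theorem sum_le_sum_add_card_mul {ι : Type*} {s : Finset ι} {f g : ι → ℝ} {δ : ℝ}
    (h : ∀ j ∈ s, f j ≤ g j + δ) : ∑ j ∈ s, f j ≤ ∑ j ∈ s, g j + #s * δ := by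
  calc ∑ j ∈ s, f j ≤ ∑ j ∈ s, (g j + δ) := sum_le_sum h
    _ = ∑ j ∈ s, g j + #s * δ := by rw [sum_add_distrib, sum_const, nsmul_eq_mul]

section Margin

variable {J : ℕ} {ϱ : Fin J → ℝ}

theorem sInf_range_div_nonneg (hϱ : ∀ j, 0 < ϱ j) : 0 ≤ sInf (Set.range ϱ) / (2 * J) :=
  div_nonneg (Real.sInf_nonneg (by rintro _ ⟨j, rfl⟩; exact (hϱ j).le)) (by positivity)

theorem natCast_mul_sInf_range_div_le (hϱ : ∀ j, 0 < ϱ j) (j : Fin J) :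
    J * (sInf (Set.range ϱ) / (2 * J)) ≤ ϱ j / 2 := by
  have hJ : (J : ℝ) ≠ 0 := by exact_mod_cast j.pos.ne'
  have hbdd : BddBelow (Set.range ϱ) := ⟨0, by rintro _ ⟨k, rfl⟩; exact (hϱ k).le⟩
  rw [mul_div_assoc', mul_comm (2 : ℝ), mul_div_mul_left _ _ hJ]
  linarith [csInf_le hbdd ⟨j, rfl⟩]

end Margin

section Network

variable {I J : ℕ} {K : Matrix (Fin I) (Fin J) ℝ} {jch : Fin I → Fin J}

theorem eq_of_colSum_eq_one (hK01 : ∀ i j, K i j = 0 ∨ K i j = 1)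
    (hKcols : ∀ j j' : Fin J, (∀ i, K i j = K i j') → j = j')
    (hjch : ∀ i i' : Fin I, K i' (jch i) = if i' = i then 1 else 0)
    {i : Fin I} {l : Fin J} (hil : K i l = 1) (hsum : ∑ i', K i' l = 1) : l = jch i := by
  have hcol := eq_single_of_sum_eq_one (v := fun i' => K i' l) (fun i' => hK01 i' l) hil hsum
  exact hKcols l (jch i) fun i' => by rw [hjch, congrFun hcol i', Pi.single_apply]

theorem sub_mul_le_of_saturated (hK01 : ∀ i j, K i j = 0 ∨ K i j = 1) {i : Fin I}
    (hrow : K i (jch i) = 1) {ϱ y : Fin J → ℝ} {δ : ℝ} (hδ0 : 0 ≤ δ)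
    (hshared : ∀ l, K i l = 1 → l ≠ jch i → y l ≤ ϱ l + δ)
    (hsat : y (jch i) = ∑ j, K i j * ϱ j -
      ∑ l ∈ univ.filter (fun l : Fin J => l ≠ jch i ∧ K i l = 1), y l) :
    ϱ (jch i) - J * δ ≤ y (jch i) := by
  set S := univ.filter (fun l : Fin J => l ≠ jch i ∧ K i l = 1)
  have hsum := sum_le_sum_add_card_mul (s := S) fun l hl =>
    hshared l (mem_filter.1 hl).2.2 (mem_filter.1 hl).2.1
  have hcard : (#S : ℝ) ≤ J := by exact_mod_cast (card_le_univ S).trans_eq (Fintype.card_fin J)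
  have hcardδ : (#S : ℝ) * δ ≤ J * δ := mul_le_mul_of_nonneg_right hcard hδ0
  rw [hsat, sum_mul_eq_add_sum_filter_ne (hK01 i) hrow]
  linarith

end Network

/-- Admissibility of the rate allocation: the rate vector `y` is nonnegative
and satisfies the capacity constraint `K y ≤ C`. -/
theorem stmt_19 (I J : ℕ) (K : Matrix (Fin I) (Fin J) ℝ)
    (hK01 : ∀ i j, K i j = 0 ∨ K i j = 1)
    (hKcols : ∀ j j' : Fin J, (∀ i, K i j = K i j') → j = j')
    (ϱ : Fin J → ℝ) (hϱ : ∀ j, 0 < ϱ j)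
    (Cap : Fin I → ℝ) (hCap : ∀ i, Cap i = ∑ j, K i j * ϱ j)
    (δ : ℝ) (hδ : δ = sInf (Set.range ϱ) / (2 * J))
    (jch : Fin I → Fin J)
    (hjch : ∀ i i' : Fin I, K i' (jch i) = if i' = i then 1 else 0)
    (y : Fin J → ℝ)
    (hy1 : ∀ j : Fin J, (∑ i, K i j) ≠ 1 → ϱ j - δ ≤ y j ∧ y j ≤ ϱ j + δ)
    (hy2 : ∀ i : Fin I,
      y (jch i) = Cap i -
          ∑ l ∈ Finset.univ.filter (fun l : Fin J => l ≠ jch i ∧ K i l = 1), y l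
      ∨ (y (jch i) = ϱ (jch i) - δ ∧ ∀ l : Fin J, K i l = 1 → y l < ϱ l)) :
    (∀ j, 0 ≤ y j) ∧ ∀ i, (K.mulVec y) i ≤ Cap i := by
  have hδ0 : 0 ≤ δ := hδ ▸ sInf_range_div_nonneg hϱ
  have hJδ : ∀ j, J * δ ≤ ϱ j / 2 := hδ ▸ natCast_mul_sInf_range_div_le hϱ
  have hδϱ : ∀ j : Fin J, δ ≤ ϱ j / 2 := fun j =>
    (le_mul_of_one_le_left hδ0 (by exact_mod_cast j.pos)).trans (hJδ j)
  have hrow : ∀ i, K i (jch i) = 1 := fun i => by simpa using hjch i i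
  have hshared : ∀ i l, K i l = 1 → l ≠ jch i → y l ≤ ϱ l + δ := fun i l hil hne =>
    (hy1 l fun hsum => hne (eq_of_colSum_eq_one hK01 hKcols hjch hil hsum)).2
  have hjch_nonneg : ∀ i, 0 ≤ y (jch i) := fun i => by
    rcases hy2 i with hsat | ⟨hmin, -⟩
    · linarith [sub_mul_le_of_saturated hK01 (hrow i) hδ0 (hshared i) (hCap i ▸ hsat),
        hJδ (jch i), hϱ (jch i)]
    · linarith [hδϱ (jch i), hϱ (jch i)]
  refine ⟨fun j => ?_, fun i => ?_⟩
  · by_cases hj : ∑ i, K i j = 1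
    · obtain ⟨i, -, hi⟩ := exists_ne_zero_of_sum_ne_zero (hj ▸ one_ne_zero)
      exact eq_of_colSum_eq_one hK01 hKcols hjch ((hK01 i j).resolve_left hi) hj ▸ hjch_nonneg i
    · linarith [(hy1 j hj).1, hδϱ j, hϱ j]
  · change ∑ j, K i j * y j ≤ Cap i
    rcases hy2 i with hsat | ⟨-, hlt⟩
    · rw [sum_mul_eq_add_sum_filter_ne (hK01 i) (hrow i), hsat]
      linarith
    · exact hCap i ▸ sum_mul_le_sum_mul_of_zero_or_one (hK01 i) fun l hl => (hlt l hl).le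
end
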